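/- arXiv:2309.15692 — 5 statements merged into one kernel-verified Lean document; each statement's English description precedes it below -/
import Mathlib

section
/- Let a be an integer coprime to p. The power series F_a(T) = 1/T - a/((1+T)^a - 1) lies in ℤ_p[[T]]. -/
/-!
Since `(1+T)^a - 1 = T·v` with `v = ∑_{i<a} (1+T)^i`, whose constant term `a` is a `p`-adic unit,
`F_a = 1/T - a/(T v) = (v - a)/(T v)`: the numerator `v - a` is divisible by `T`, and `v` is
invertible in `ℤ_p[[T]]`.
-/

open Finset

namespace PowerSeries

variable {R : Type*} [CommRing R]

theorem one_add_X_pow_sub_one_eq_X_mul_geom_sum (a : ℕ) :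
    (1 + X : R⟦X⟧) ^ a - 1 = X * ∑ i ∈ range a, (1 + X) ^ i := by
  rw [← mul_geom_sum, add_sub_cancel_left]

theorem constantCoeff_geom_sum_one_add_X (a : ℕ) :
    constantCoeff (∑ i ∈ range a, (1 + X : R⟦X⟧) ^ i) = a := by
  simp

theorem exists_X_mul_mul_eq_sub_C_constantCoeff {v : R⟦X⟧} (hv : IsUnit v) :
    ∃ F : R⟦X⟧, X * v * F = v - C (constantCoeff v) := by
  obtain ⟨w, hw⟩ := X_dvd_iff.mpr (by simp : constantCoeff (v - C (constantCoeff v)) = 0)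
  exact ⟨hv.unit⁻¹ * w, by
    rw [hw, mul_assoc, ← mul_assoc v, hv.mul_val_inv, one_mul]⟩

theorem exists_X_mul_one_add_X_pow_sub_one_mul_eq {a : ℕ} (ha : IsUnit (a : R)) :
    ∃ F : R⟦X⟧, X * ((1 + X) ^ a - 1) * F = ((1 + X) ^ a - 1) - (a : R⟦X⟧) * X := by
  set v : R⟦X⟧ := ∑ i ∈ range a, (1 + X) ^ i
  have hv : IsUnit v := by
    rwa [isUnit_iff_constantCoeff, constantCoeff_geom_sum_one_add_X]
  obtain ⟨F, hF⟩ := exists_X_mul_mul_eq_sub_C_constantCoeff hv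
  refine ⟨F, ?_⟩
  rw [constantCoeff_geom_sum_one_add_X, map_natCast] at hF
  calc X * ((1 + X) ^ a - 1) * F = X * (X * v * F) := by
        rw [one_add_X_pow_sub_one_eq_X_mul_geom_sum]; ring
    _ = ((1 + X) ^ a - 1) - (a : R⟦X⟧) * X := by
        rw [hF, one_add_X_pow_sub_one_eq_X_mul_geom_sum]; ring

end PowerSeries

/-- **Integrality of the power series `F_a`.**
Let `a` be an integer coprime to `p`.  The power series
`F_a(T) = 1/T - a/((1+T)^a - 1)` lies in `ℤ_p[[T]]`; equivalently, there is a power series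
`F ∈ ℤ_p[[T]]` with `T·((1+T)^a - 1)·F = ((1+T)^a - 1) - a·T`. -/
theorem F_a_integral (p : ℕ) [Fact p.Prime] (a : ℕ) (ha : Nat.Coprime a p) :
    ∃ F : PowerSeries ℤ_[p],
      PowerSeries.X * ((1 + PowerSeries.X) ^ a - 1) * F =
        ((1 + PowerSeries.X) ^ a - 1) - (a : PowerSeries ℤ_[p]) * PowerSeries.X :=
  PowerSeries.exists_X_mul_one_add_X_pow_sub_one_mul_eq
    (PadicInt.isUnit_iff.mpr (PadicInt.norm_natCast_eq_one_iff.mpr ha.symm))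
end

section
/- The function f_a(t) = 1/(e^t - 1) - a/(e^{at} - 1) (for a a positive integer) is smooth on (0,∞), extends smoothly to t = 0, and satisfies L(f_a, s) = (1 - a^{1-s}) ζ(s) for Re(s) > 1, where L(f,s) = (1/Γ(s)) ∫₀^∞ f(t) t^{s-1} dt. -/
open Set

section AuxSmoothedZeta

open Filter Topology

lemma aux_geom (u : ℝ) (hu : 0 < u) :
    HasSum (fun m : ℕ => Real.exp (-(((m:ℝ) + 1) * u))) (1 / (Real.exp u - 1)) := by
  have h0 : Real.exp (-u) < 1 := Real.exp_lt_one_iff.mpr (by linarith)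
  have h1 : (0:ℝ) ≤ Real.exp (-u) := (Real.exp_pos _).le
  have h := (hasSum_geometric_of_lt_one h1 h0).mul_left (Real.exp (-u))
  have he1 : Real.exp u - 1 ≠ 0 := by
    have : 1 < Real.exp u := by
      rw [show (1:ℝ) = Real.exp 0 by simp]
      exact Real.exp_lt_exp.mpr hu
    linarith
  have hval : Real.exp (-u) * (1 - Real.exp (-u))⁻¹ = 1 / (Real.exp u - 1) := by
    rw [Real.exp_neg, eq_div_iff he1, mul_comm ((Real.exp u)⁻¹), mul_assoc,
      inv_eq_one_div, inv_eq_one_div]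
    field_simp
  rw [← hval]
  have hf : (fun m : ℕ => Real.exp (-(((m:ℝ) + 1) * u))) = fun i => Real.exp (-u) * Real.exp (-u) ^ i := by
    funext m
    rw [← Real.exp_nat_mul, ← Real.exp_add]
    ring_nf
  rw [hf]; exact h

lemma aux_mellin (a : ℕ) (ha : 1 ≤ a) (s : ℂ) (hs : 1 < s.re) :
    (1 / Complex.Gamma s) * ∫ t in Ioi (0 : ℝ),
        ((1 / (Real.exp t - 1) - a / (Real.exp (a * t) - 1) : ℝ) : ℂ) * (t : ℂ) ^ (s - 1) =
      (1 - (a : ℂ) ^ ((1 : ℂ) - s)) * riemannZeta s := by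
  have hs0 : 0 < s.re := by linarith
  have haR : (0:ℝ) < a := by exact_mod_cast ha
  have haC : (a:ℂ) ≠ 0 := by
    simp only [Ne, Nat.cast_eq_zero]
    omega
  set F : ℝ → ℂ := fun t => ((1 / (Real.exp t - 1) - a / (Real.exp (a * t) - 1) : ℝ) : ℂ) with hFdef
  set c : ℕ → ℂ := fun m => 1 - (if a ∣ m + 1 then (a:ℂ) else 0) with hcdef
  set p : ℕ → ℝ := fun m => (m:ℝ) + 1 with hpdef
  set g : ℕ → ℕ := fun n => a * n + (a - 1) with hgdef
  have hg1 : ∀ n, g n + 1 = a * (n + 1) := by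
    intro n
    simp only [g, Nat.mul_succ]
    omega
  have hginj : Function.Injective g := by
    intro m n h
    simp only [g, add_left_inj] at h
    exact Nat.eq_of_mul_eq_mul_left (by omega) h
  have hrange : ∀ x, a ∣ x + 1 ↔ x ∈ Set.range g := by
    intro x
    constructor
    · rintro ⟨k, hk⟩
      have hk0 : k ≠ 0 := by rintro rfl; omega
      obtain ⟨n, rfl⟩ := Nat.exists_eq_succ_of_ne_zero hk0
      refine ⟨n, ?_⟩
      have : x + 1 = a * n + a := by rw [hk, Nat.mul_succ]
      simp only [g]
      omega
    · rintro ⟨n, rfl⟩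
      rw [hg1 n]
      exact Dvd.intro _ rfl
  have hZsummable : Summable (fun n : ℕ => 1 / ((n:ℂ) + 1) ^ s) := by
    apply Summable.of_norm
    have h2 : Summable (fun n : ℕ => 1 / ((n:ℝ) + 1) ^ s.re) := by
      have := (summable_nat_add_iff 1).mpr (Real.summable_one_div_nat_rpow.mpr hs)
      exact this.congr fun n => by simp
    convert h2 using 2 with n
    rw [norm_div, norm_one]
    congr 1
    rw [show ((n:ℂ) + 1) = (((n:ℝ) + 1 : ℝ) : ℂ) by push_cast; ring]
    rw [Complex.norm_cpow_eq_rpow_re_of_pos (by positivity)]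
  have hZ : HasSum (fun n : ℕ => 1 / ((n:ℂ) + 1) ^ s) (riemannZeta s) :=
    hZsummable.hasSum_iff.mpr (zeta_eq_tsum_one_div_nat_add_one_cpow hs).symm
  have hcpow : ∀ n : ℕ, ((a:ℂ) * ((n:ℂ) + 1)) ^ s = (a:ℂ) ^ s * ((n:ℂ) + 1) ^ s := by
    intro n
    have h0 : (0:ℝ) ≤ (n:ℝ) + 1 := by positivity
    have := Complex.mul_cpow_ofReal_nonneg haR.le h0 s
    push_cast at this
    exact this
  have hane : (a:ℂ) ^ s ≠ 0 := by
    rw [Ne, Complex.cpow_eq_zero_iff]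
    tauto
  have ha1s : (a:ℂ) ^ ((1:ℂ) - s) = (a:ℂ) * ((a:ℂ) ^ s)⁻¹ := by
    rw [Complex.cpow_sub _ _ haC, Complex.cpow_one, div_eq_mul_inv]
  have S1 : HasSum (fun m : ℕ => Complex.Gamma s * (1 / ((m:ℂ) + 1) ^ s))
      (Complex.Gamma s * riemannZeta s) := hZ.mul_left _
  have S2 : HasSum (fun m : ℕ => if a ∣ m + 1 then Complex.Gamma s * a / ((m:ℂ) + 1) ^ s else 0)
      ((a:ℂ) ^ ((1:ℂ) - s) * (Complex.Gamma s * riemannZeta s)) := by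
    rw [← Function.Injective.hasSum_iff hginj
      (fun x hx => if_neg (fun h => hx ((hrange x).mp h)))]
    have hfun : ((fun m : ℕ => if a ∣ m + 1 then Complex.Gamma s * a / ((m:ℂ) + 1) ^ s else 0) ∘ g)
        = fun n : ℕ => Complex.Gamma s * a * ((a:ℂ) ^ s)⁻¹ * (1 / ((n:ℂ) + 1) ^ s) := by
      funext n
      simp only [Function.comp_apply]
      rw [if_pos ((hrange (g n)).mpr ⟨n, rfl⟩)]
      have hgn : ((g n : ℂ) + 1) = (a:ℂ) * ((n:ℂ) + 1) := by
        rw [show ((g n : ℂ) + 1) = ((g n + 1 : ℕ) : ℂ) by push_cast; ring, hg1 n]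
        push_cast; ring
      rw [hgn, hcpow n]
      have hne : ((n:ℂ) + 1) ^ s ≠ 0 := by
        rw [Ne, Complex.cpow_eq_zero_iff]
        have : ((n:ℂ) + 1) ≠ 0 := by
          rw [show ((n:ℂ) + 1) = ((n + 1 : ℕ) : ℂ) by push_cast; ring]
          exact_mod_cast Nat.succ_ne_zero n
        tauto
      field_simp
    rw [hfun, show (a:ℂ) ^ ((1:ℂ) - s) * (Complex.Gamma s * riemannZeta s)
      = Complex.Gamma s * a * ((a:ℂ) ^ s)⁻¹ * riemannZeta s by rw [ha1s]; ring]
    exact hZ.mul_left _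
  have SD : HasSum (fun m : ℕ => Complex.Gamma s * c m / ((p m : ℝ) : ℂ) ^ s)
      ((1 - (a : ℂ) ^ ((1 : ℂ) - s)) * (Complex.Gamma s * riemannZeta s)) := by
    have hfun : (fun m : ℕ => Complex.Gamma s * c m / ((p m : ℝ) : ℂ) ^ s)
        = fun m : ℕ => Complex.Gamma s * (1 / ((m:ℂ) + 1) ^ s) -
          (if a ∣ m + 1 then Complex.Gamma s * a / ((m:ℂ) + 1) ^ s else 0) := by
      funext m
      simp only [c, p]
      rw [show ((((m:ℝ) + 1) : ℝ) : ℂ) = ((m:ℂ) + 1) by push_cast; ring]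
      split_ifs with h
      · ring
      · ring
    rw [hfun, sub_mul, one_mul]
    exact S1.sub S2
  have hp : ∀ m : ℕ, c m = 0 ∨ 0 < p m := fun m => Or.inr (by positivity)
  have hFsum : ∀ t ∈ Ioi (0:ℝ), HasSum (fun m : ℕ => c m * Real.exp (-p m * t)) (F t) := by
    intro t ht
    rw [mem_Ioi] at ht
    have hA := aux_geom t ht
    have hB := (aux_geom ((a:ℝ) * t) (by positivity)).mul_left (a:ℝ)
    set fB : ℕ → ℝ := fun m => if a ∣ m + 1 then a * Real.exp (-(((m:ℝ) + 1) * t)) else 0 with hfBdef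
    have hfB : HasSum fB ((a:ℝ) * (1 / (Real.exp ((a:ℝ) * t) - 1))) := by
      rw [← Function.Injective.hasSum_iff hginj
        (fun x hx => if_neg (fun h => hx ((hrange x).mp h)))]
      have hfun2 : (fB ∘ g) = fun n : ℕ => (a:ℝ) * Real.exp (-(((n:ℝ) + 1) * ((a:ℝ) * t))) := by
        funext n
        simp only [Function.comp_apply, fB]
        rw [if_pos ((hrange (g n)).mpr ⟨n, rfl⟩)]
        congr 1
        rw [show ((g n : ℝ) + 1) = ((g n + 1 : ℕ) : ℝ) by push_cast; ring, hg1 n]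
        push_cast
        ring_nf
      rw [hfun2]
      exact hB
    have hAB := hA.sub hfB
    have hC := Complex.hasSum_ofReal.mpr hAB
    have hterm : ∀ m : ℕ, ((Real.exp (-(((m:ℝ) + 1) * t)) - fB m : ℝ) : ℂ)
        = c m * Real.exp (-p m * t) := by
      intro m
      simp only [c, p, fB]
      split_ifs with h
      · push_cast
        rw [neg_mul]
        ring
      · push_cast
        rw [neg_mul]
        ring
    simp only [hterm] at hC
    have hval : ((1 / (Real.exp t - 1) - (a:ℝ) * (1 / (Real.exp ((a:ℝ) * t) - 1)) : ℝ) : ℂ)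
        = F t := by
      simp only [F, mul_one_div]
    rwa [hval] at hC
  have h_sum : Summable fun m : ℕ => ‖c m‖ / (p m) ^ s.re := by
    have hbase : Summable (fun m : ℕ => (1 + (a:ℝ)) * (1 / ((m:ℝ) + 1) ^ s.re)) := by
      apply Summable.mul_left
      have := (summable_nat_add_iff 1).mpr (Real.summable_one_div_nat_rpow.mpr hs)
      exact this.congr fun n => by simp
    apply Summable.of_nonneg_of_le (fun m => by positivity) (fun m => ?_) hbase
    rw [mul_one_div]
    apply div_le_div_of_nonneg_right ?_ (by positivity)
    simp only [c]
    refine (norm_sub_le _ _).trans ?_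
    rw [norm_one]
    refine add_le_add le_rfl ?_
    split_ifs with h
    · simp
    · simp [haR.le]
  have hM := hasSum_mellin hp hs0 hFsum h_sum
  have hMval : mellin F s = (1 - (a : ℂ) ^ ((1 : ℂ) - s)) * (Complex.Gamma s * riemannZeta s) :=
    hM.unique SD
  have hint : (∫ t in Ioi (0:ℝ), F t * (t:ℂ) ^ (s - 1)) = mellin F s := by
    simp only [mellin, smul_eq_mul]
    exact MeasureTheory.setIntegral_congr_fun measurableSet_Ioi fun t ht => mul_comm _ _
  have hGamma : Complex.Gamma s ≠ 0 := Complex.Gamma_ne_zero_of_re_pos hs0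
  rw [show (∫ t in Ioi (0:ℝ),
      ((1 / (Real.exp t - 1) - a / (Real.exp (a * t) - 1) : ℝ) : ℂ) * (t : ℂ) ^ (s - 1))
    = mellin F s from hint, hMval]
  field_simp

lemma aux_expne {z : ℂ} (hz : z ≠ 0) (h2 : ‖z‖ < 2 * Real.pi) :
    Complex.exp z ≠ 1 := by
  rw [Ne, Complex.exp_eq_one_iff]
  rintro ⟨n, rfl⟩
  rcases eq_or_ne n 0 with rfl | hn
  · simp at hz
  · have h1 : (1:ℝ) ≤ |(n:ℝ)| := by
      rw [← Int.cast_abs]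
      exact_mod_cast Int.one_le_abs hn
    simp only [norm_mul, Complex.norm_intCast, Complex.norm_real, Complex.norm_I,
      Complex.norm_two, Real.norm_eq_abs, abs_of_pos Real.pi_pos, mul_one] at h2
    nlinarith [Real.pi_pos]

lemma aux_ext (a : ℕ) (ha : 1 ≤ a) :
    ∃ g : ℝ → ℝ, ContDiff ℝ (⊤ : ℕ∞) g ∧ ∀ t : ℝ, 0 < t →
      g t = 1 / (Real.exp t - 1) - a / (Real.exp (a * t) - 1) := by
  have haR : (0:ℝ) < a := by exact_mod_cast ha
  have haC : (a:ℂ) ≠ 0 := by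
    simp only [Ne, Nat.cast_eq_zero]; omega
  set f₀ : ℂ → ℂ := fun z => 1 / (Complex.exp z - 1) - (a:ℂ) / (Complex.exp ((a:ℂ) * z) - 1)
    with hf₀def
  set N : ℂ → ℂ := fun z => Complex.exp ((a:ℂ) * z) - 1 - (a:ℂ) * (Complex.exp z - 1) with hNdef
  -- derivative facts
  have hNdiff : Differentiable ℂ N :=
    ((Complex.differentiable_exp.comp ((differentiable_id.const_mul (a:ℂ)))).sub_const 1).sub
      ((Complex.differentiable_exp.sub_const 1).const_mul (a:ℂ))
  have hN0 : N 0 = 0 := by simp [N]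
  have hNderiv : deriv N 0 = 0 := by
    have h1 : HasDerivAt (fun z : ℂ => Complex.exp ((a:ℂ) * z)) ((a:ℂ)) 0 := by
      have := ((hasDerivAt_id (0:ℂ)).const_mul (a:ℂ)).cexp
      simpa using this
    have h2 : HasDerivAt (fun z : ℂ => (a:ℂ) * (Complex.exp z - 1)) ((a:ℂ)) 0 := by
      have := ((Complex.hasDerivAt_exp 0).sub_const 1).const_mul (a:ℂ)
      simpa using this
    have h3 := (h1.sub_const 1).sub h2
    have h4 : HasDerivAt N ((a:ℂ) - (a:ℂ)) 0 := h3
    rw [h4.deriv, sub_self]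
  -- Q = N z / z^2 with removable singularity
  obtain ⟨pN, hpN⟩ := hNdiff.analyticAt 0
  have hd1 : HasFPowerSeriesAt (dslope N 0) pN.fslope 0 := hpN.has_fpower_series_dslope_fslope
  have hd2 : HasFPowerSeriesAt (dslope (dslope N 0) 0) pN.fslope.fslope 0 :=
    hd1.has_fpower_series_dslope_fslope
  set Q : ℂ → ℂ := dslope (dslope N 0) 0 with hQdef
  have hQcont : ContinuousAt Q 0 := hd2.continuousAt
  have hQeq : ∀ z : ℂ, z ≠ 0 → Q z = N z / z ^ 2 := by
    intro z hz
    rw [hQdef, dslope_of_ne _ hz, slope_def_field, dslope_of_ne _ hz, slope_def_field,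
      dslope_same, hNderiv, hN0]
    simp [sub_zero, div_div, sq]
  -- limits
  have hmul : Tendsto (fun z : ℂ => (a:ℂ) * z) (𝓝[≠] 0) (𝓝[≠] 0) := by
    rw [tendsto_nhdsWithin_iff]
    constructor
    · have h : Continuous (fun z : ℂ => (a:ℂ) * z) := continuous_const.mul continuous_id
      have h2 := h.tendsto (0:ℂ)
      simp only [mul_zero] at h2
      exact h2.mono_left nhdsWithin_le_nhds
    · filter_upwards [self_mem_nhdsWithin] with z hz
      simp only [mem_compl_iff, mem_singleton_iff] at *
      exact mul_ne_zero haC hz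
  have T1 : Tendsto (fun z : ℂ => (Complex.exp z - 1) / z) (𝓝[≠] 0) (𝓝 1) := by
    have hexp := Complex.hasDerivAt_exp 0
    rw [hasDerivAt_iff_tendsto_slope, Complex.exp_zero] at hexp
    refine hexp.congr fun z => ?_
    rw [slope_def_field, Complex.exp_zero, sub_zero]
  have T1' : Tendsto (fun z : ℂ => z / (Complex.exp z - 1)) (𝓝[≠] 0) (𝓝 1) := by
    have := T1.inv₀ one_ne_zero
    simp only [inv_one] at this
    refine this.congr' ?_
    filter_upwards [self_mem_nhdsWithin] with z hz
    rw [inv_div]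
  have T2' : Tendsto (fun z : ℂ => z / (Complex.exp ((a:ℂ) * z) - 1)) (𝓝[≠] 0) (𝓝 ((a:ℂ)⁻¹)) := by
    have h := (T1'.comp hmul).const_mul ((a:ℂ)⁻¹)
    simp only [mul_one] at h
    refine h.congr' ?_
    filter_upwards [self_mem_nhdsWithin] with z hz
    simp only [Function.comp_apply]
    rw [mul_div_assoc']
    congr 1
    exact inv_mul_cancel_left₀ haC z
  have T3 : Tendsto (fun z : ℂ => N z / z ^ 2) (𝓝[≠] 0) (𝓝 (Q 0)) := by
    refine (hQcont.tendsto.mono_left nhdsWithin_le_nhds).congr' ?_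
    filter_upwards [self_mem_nhdsWithin] with z hz
    exact hQeq z hz
  -- eventual smallness
  have hrpos : (0:ℝ) < 2 * Real.pi / a := by positivity
  have hsmall : ∀ᶠ z in 𝓝[≠] (0:ℂ), ‖z‖ < 2 * Real.pi / a := by
    apply Filter.Eventually.filter_mono nhdsWithin_le_nhds
    have : Metric.ball (0:ℂ) (2 * Real.pi / a) ∈ 𝓝 (0:ℂ) := Metric.ball_mem_nhds _ hrpos
    filter_upwards [this] with z hz
    simpa [Complex.dist_eq] using hz
  have hne12 : ∀ z : ℂ, z ≠ 0 → ‖z‖ < 2 * Real.pi / a →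
      Complex.exp z - 1 ≠ 0 ∧ Complex.exp ((a:ℂ) * z) - 1 ≠ 0 := by
    intro z hz hzr
    have hra : 2 * Real.pi / a ≤ 2 * Real.pi :=
      div_le_self (by positivity) (by exact_mod_cast ha)
    constructor
    · exact sub_ne_zero.mpr (aux_expne hz (lt_of_lt_of_le hzr hra))
    · refine sub_ne_zero.mpr (aux_expne (mul_ne_zero haC hz) ?_)
      rw [norm_mul, Complex.norm_natCast]
      calc (a:ℝ) * ‖z‖ < (a:ℝ) * (2 * Real.pi / a) := by
            exact mul_lt_mul_of_pos_left hzr haR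
        _ = 2 * Real.pi := by field_simp
  have hlim : Tendsto f₀ (𝓝[≠] 0) (𝓝 (Q 0 * 1 * (a:ℂ)⁻¹)) := by
    refine ((T3.mul T1').mul T2').congr' ?_
    filter_upwards [self_mem_nhdsWithin, hsmall] with z hz hzr
    simp only [mem_compl_iff, mem_singleton_iff] at hz
    obtain ⟨hE1, hE2⟩ := hne12 z hz hzr
    simp only [f₀, N]
    field_simp
  -- the extended function
  set L : ℂ := Q 0 * 1 * (a:ℂ)⁻¹ with hLdef
  set Fc : ℂ → ℂ := Function.update f₀ 0 L with hFcdef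
  have hFc0 : ContinuousAt Fc 0 := continuousAt_update_same.mpr hlim
  have hFcdiff : ∀ z : ℂ, z ≠ 0 → Complex.exp z ≠ 1 → Complex.exp ((a:ℂ) * z) ≠ 1 →
      DifferentiableAt ℂ Fc z := by
    intro z hz h1 h2
    have hd : DifferentiableAt ℂ f₀ z := by
      apply DifferentiableAt.sub
      · exact (differentiableAt_const _).div
          ((Complex.differentiable_exp.differentiableAt).sub_const 1) (sub_ne_zero.mpr h1)
      · refine (differentiableAt_const _).div ?_ (sub_ne_zero.mpr h2)
        exact (((Complex.differentiable_exp.comp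
          (differentiable_id.const_mul (a:ℂ))) z).sub_const 1)
    refine hd.congr_of_eventuallyEq ?_
    filter_upwards [isOpen_compl_singleton.mem_nhds hz] with w hw
    exact Function.update_of_ne hw _ _
  have hball : DifferentiableOn ℂ Fc (Metric.ball (0:ℂ) (2 * Real.pi / a)) := by
    refine (Complex.differentiableOn_compl_singleton_and_continuousAt_iff
      (Metric.ball_mem_nhds (0:ℂ) hrpos)).mp ⟨?_, hFc0⟩
    intro z hzmem
    obtain ⟨hzball, hz0⟩ := hzmem
    simp only [mem_singleton_iff] at hz0
    have habs : ‖z‖ < 2 * Real.pi / a := by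
      simpa [Complex.dist_eq] using hzball
    obtain ⟨hE1, hE2⟩ := hne12 z hz0 habs
    have h1 : Complex.exp z ≠ 1 := by intro h; exact hE1 (by rw [h]; ring)
    have h2 : Complex.exp ((a:ℂ) * z) ≠ 1 := by intro h; exact hE2 (by rw [h]; ring)
    exact (hFcdiff z hz0 h1 h2).differentiableWithinAt
  -- the open set V and differentiability on it
  set V : Set ℂ := Metric.ball (0:ℂ) (2 * Real.pi / a) ∪
    ({z | Complex.exp z ≠ 1} ∩ {z | Complex.exp ((a:ℂ) * z) ≠ 1}) with hVdef
  have hVopen : IsOpen V := by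
    apply Metric.isOpen_ball.union
    apply IsOpen.inter
    · exact isOpen_compl_singleton.preimage Complex.continuous_exp
    · exact isOpen_compl_singleton.preimage
        (Complex.continuous_exp.comp (continuous_const.mul continuous_id))
  have hVmem : ∀ x : ℝ, (x:ℂ) ∈ V := by
    intro x
    rcases eq_or_ne x 0 with rfl | hx
    · refine Or.inl ?_
      rw [Complex.ofReal_zero]
      exact Metric.mem_ball_self hrpos
    · refine Or.inr ⟨?_, ?_⟩
      · simp only [mem_setOf_eq, ← Complex.ofReal_exp]
        intro h
        have : Real.exp x = 1 := by exact_mod_cast h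
        exact hx (by rwa [Real.exp_eq_one_iff] at this)
      · simp only [mem_setOf_eq]
        rw [show ((a:ℂ) * (x:ℂ)) = (((a:ℝ) * x : ℝ) : ℂ) by push_cast; ring, ← Complex.ofReal_exp]
        intro h
        have h' : Real.exp ((a:ℝ) * x) = 1 := by exact_mod_cast h
        rw [Real.exp_eq_one_iff] at h'
        rcases mul_eq_zero.mp h' with h0 | h0
        · exact absurd h0 haR.ne'
        · exact hx h0
  have hVdiff : DifferentiableOn ℂ Fc V := by
    intro z hz
    rcases eq_or_ne z 0 with rfl | hz0
    · exact (hball.differentiableAt (Metric.ball_mem_nhds _ hrpos)).differentiableWithinAt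
    · rcases hz with hzb | ⟨h1, h2⟩
      · have habs : ‖z‖ < 2 * Real.pi / a := by
          simpa [Complex.dist_eq] using hzb
        obtain ⟨hE1, hE2⟩ := hne12 z hz0 habs
        have h1 : Complex.exp z ≠ 1 := by intro h; exact hE1 (by rw [h]; ring)
        have h2 : Complex.exp ((a:ℂ) * z) ≠ 1 := by intro h; exact hE2 (by rw [h]; ring)
        exact (hFcdiff z hz0 h1 h2).differentiableWithinAt
      · exact (hFcdiff z hz0 h1 h2).differentiableWithinAt
  have hFan : ∀ x : ℝ, AnalyticAt ℂ Fc (x:ℂ) :=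
    fun x => hVdiff.analyticAt (hVopen.mem_nhds (hVmem x))
  refine ⟨fun t => (Fc t).re, ?_, ?_⟩
  · rw [contDiff_iff_contDiffAt]
    intro t
    have h1 : ContDiffAt ℝ (⊤ : ℕ∞) Fc (t:ℂ) := ((hFan t).contDiffAt).restrict_scalars ℝ
    have h2 : ContDiffAt ℝ (⊤ : ℕ∞) (fun x : ℝ => Fc x) t :=
      h1.comp t (Complex.ofRealCLM.contDiff.contDiffAt)
    exact Complex.reCLM.contDiff.contDiffAt.comp t h2
  · intro t ht
    show (Fc (t:ℂ)).re = 1 / (Real.exp t - 1) - a / (Real.exp (a * t) - 1)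
    have ht0 : (t:ℂ) ≠ 0 := by
      simp only [Ne, Complex.ofReal_eq_zero]
      exact ht.ne'
    have hupd : Fc (t:ℂ) = f₀ t := Function.update_of_ne ht0 _ _
    rw [hupd]
    simp only [f₀]
    rw [show ((a:ℂ) * (t:ℂ)) = (((a:ℝ) * t : ℝ) : ℂ) by push_cast; ring,
      ← Complex.ofReal_exp, ← Complex.ofReal_exp,
      show (1 / ((Real.exp t : ℂ) - 1) - (a:ℂ) / ((Real.exp ((a:ℝ) * t) : ℂ) - 1))
        = (((1 / (Real.exp t - 1) - a / (Real.exp (a * t) - 1) : ℝ)) : ℂ) by push_cast; ring,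
      Complex.ofReal_re]

end AuxSmoothedZeta

/-- **The smoothed zeta integrand `f_a`.**
For a positive integer `a`, the function `f_a(t) = 1/(e^t - 1) - a/(e^{at} - 1)` is smooth on
`(0,∞)`, extends smoothly to `t = 0`, and its Mellin transform satisfies
`L(f_a, s) = (1 - a^{1-s}) ζ(s)` for `Re(s) > 1`, where
`L(f,s) = (1/Γ(s)) ∫₀^∞ f(t) t^{s-1} dt`. -/
theorem smoothed_zeta_integrand (a : ℕ) (ha : 1 ≤ a) :
    ContDiffOn ℝ (⊤ : ℕ∞)
      (fun t : ℝ => 1 / (Real.exp t - 1) - a / (Real.exp (a * t) - 1)) (Ioi 0) ∧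
    (∃ g : ℝ → ℝ, ContDiff ℝ (⊤ : ℕ∞) g ∧ ∀ t : ℝ, 0 < t →
      g t = 1 / (Real.exp t - 1) - a / (Real.exp (a * t) - 1)) ∧
    (∀ s : ℂ, 1 < s.re →
      (1 / Complex.Gamma s) * ∫ t in Ioi (0 : ℝ),
          ((1 / (Real.exp t - 1) - a / (Real.exp (a * t) - 1) : ℝ) : ℂ) * (t : ℂ) ^ (s - 1) =
        (1 - (a : ℂ) ^ ((1 : ℂ) - s)) * riemannZeta s) := by
  have haR : (0:ℝ) < a := by exact_mod_cast ha
  have hexp_gt : ∀ u : ℝ, 0 < u → Real.exp u - 1 ≠ 0 := by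
    intro u hu
    have : 1 < Real.exp u := by
      rw [show (1:ℝ) = Real.exp 0 by simp]
      exact Real.exp_lt_exp.mpr hu
    linarith
  refine ⟨?_, aux_ext a ha, fun s hs => aux_mellin a ha s hs⟩
  apply ContDiffOn.sub
  · refine ContDiffOn.div contDiffOn_const
      ((Real.contDiff_exp.sub contDiff_const).contDiffOn) ?_
    intro t ht
    exact hexp_gt t (mem_Ioi.mp ht)
  · refine ContDiffOn.div contDiffOn_const
      (((Real.contDiff_exp.comp (contDiff_const.mul contDiff_id)).sub contDiff_const).contDiffOn) ?_
    intro t ht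
    exact hexp_gt _ (mul_pos haR (mem_Ioi.mp ht))
end

section
/- A ℤ_p-valued measure μ on ℤ_p is supported on ℤ_p^× (i.e. Res_{ℤ_p^×}(μ) = μ) if and only if ψ(A_μ) = 0, where A_μ ∈ ℤ_p[[T]] is the Mahler transform of μ and ψ is the unique operator on power series satisfying φ∘ψ(F)(T) = p^{-1} Σ_{ξ∈μ_p} F((1+T)ξ - 1). -/
/-!
`Ψμ(f) = μ(g)` where `g` is the extension by zero of `y ↦ f (y / p)` from `pℤ_p`, which is clopen
in `ℤ_p`. If `μ` is supported on the units it kills every such `g`, so all Mahler coefficients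
`Ψμ(C(x, n))` vanish. Conversely, by Mahler's theorem the binomial functions `C(x, n)` span a dense
subspace of `C(ℤ_p, ℤ_p)`, so vanishing coefficients force `Ψμ = 0`; and `μ f - μ h = μ (f - h)`
is `Ψμ` applied to `y ↦ f (p y)` whenever `f - h` vanishes on the units and `h` on `pℤ_p`.
-/

open Function Set Topology Finset

variable (p : ℕ) [Fact p.Prime]

theorem Topology.IsEmbedding.continuous_extend_zero {X Y β : Type*} [TopologicalSpace X]
    [TopologicalSpace Y] [TopologicalSpace β] [Zero β] {e : X → Y} (he : IsEmbedding e)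
    (hrange : IsClopen (range e)) {f : X → β} (hf : Continuous f) :
    Continuous (extend e f 0) := by
  refine continuous_iff_continuousAt.2 fun y => ?_
  by_cases hy : y ∈ range e
  · obtain ⟨x, rfl⟩ := hy
    rw [← IsOpenEmbedding.continuousAt_iff ⟨he, hrange.isOpen⟩, extend_comp he.injective]
    exact hf.continuousAt
  · refine (continuousAt_const (y := (0 : β))).congr ?_
    filter_upwards [hrange.isClosed.isOpen_compl.mem_nhds hy] with z hz
    exact (extend_apply' f (0 : Y → β) z fun ⟨x, hx⟩ => hz ⟨x, hx⟩).symm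

theorem Ring.factorial_mul_choose_eq_prod {R : Type*} [CommRing R] [BinomialRing R] (x : R)
    (n : ℕ) : (n.factorial : R) * Ring.choose x n = ∏ i ∈ range n, (x - i) := by
  rw [← nsmul_eq_mul, ← descPochhammer_eq_factorial_smul_choose, ← Polynomial.aeval_eq_smeval,
    ← descPochhammer_eval_eq_prod_range, Polynomial.aeval_def, ← Polynomial.eval_map,
    descPochhammer_map]

namespace PadicInt

variable {p}

theorem eq_mahler_of_factorial_mul {B : ℕ → C(ℤ_[p], ℤ_[p])}
    (hB : ∀ (n : ℕ) (x : ℤ_[p]), (n.factorial : ℤ_[p]) * B n x = ∏ i ∈ range n, (x - i)) :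
    B = mahler := by
  ext n x
  refine mul_left_cancel₀ (Nat.cast_ne_zero.2 n.factorial_ne_zero) ?_
  rw [hB, mahler_apply, Ring.factorial_mul_choose_eq_prod]

theorem mahlerTerm_eq_smul (a : ℤ_[p]) (n : ℕ) : mahlerTerm a n = a • mahler n := by
  ext x
  simp [mahlerTerm_apply, mul_comm]

theorem continuousLinearMap_eq_zero_of_map_mahler {M : Type*} [AddCommMonoid M] [Module ℤ_[p] M]
    [TopologicalSpace M] [T2Space M] {ν : C(ℤ_[p], ℤ_[p]) →L[ℤ_[p]] M}
    (hν : ∀ n, ν (mahler n) = 0) : ν = 0 := by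
  ext f
  have hsum := ν.hasSum (hasSum_mahler f)
  simp only [mahlerTerm_eq_smul, map_smul, hν, smul_zero] at hsum
  exact hsum.unique hasSum_zero

theorem isEmbedding_p_mul : IsEmbedding fun y : ℤ_[p] => (p : ℤ_[p]) * y :=
  ((continuous_const_mul _).isClosedEmbedding
    (mul_right_injective₀ (Nat.cast_ne_zero.2 (Fact.out : p.Prime).ne_zero))).isEmbedding

theorem range_p_mul_eq_ball : range (fun y : ℤ_[p] => (p : ℤ_[p]) * y) = Metric.ball 0 1 := by
  ext x
  rw [mem_ball_zero_iff, norm_lt_one_iff_dvd]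
  exact ⟨fun ⟨y, hy⟩ => ⟨y, hy.symm⟩, fun ⟨y, hy⟩ => ⟨y, hy.symm⟩⟩

theorem exists_apply_p_mul_eq_and_eq_zero_of_not_dvd {M : Type*} [TopologicalSpace M] [Zero M]
    (c : C(ℤ_[p], M)) :
    ∃ g : C(ℤ_[p], M), (∀ y, g (p * y) = c y) ∧ ∀ x, ¬ (p : ℤ_[p]) ∣ x → g x = 0 := by
  refine ⟨⟨extend (fun y : ℤ_[p] => (p : ℤ_[p]) * y) c 0,
    isEmbedding_p_mul.continuous_extend_zero ?_ c.continuous⟩,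
    fun y => isEmbedding_p_mul.injective.extend_apply _ _ y, fun x hx => ?_⟩
  · rw [range_p_mul_eq_ball]
    exact IsUltrametricDist.isClopen_ball 0 1
  · exact extend_apply' _ _ x fun ⟨y, hy⟩ => hx ⟨y, hy.symm⟩

end PadicInt

/-- **A measure is supported on `ℤ_p^×` iff `ψ(A_μ) = 0`.**
Let `μ` be a `ℤ_p`-valued measure on `ℤ_p`, with Mahler transform
`A_μ(T) = Σ_n (μ(C(x,n))) T^n` (where `B n` is the binomial coefficient function `C(x,n)`),
and let `Ψ` denote the trace operator `ψ` on measures (so that `ψ(A_μ) = A_{Ψμ}`).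
Then `μ` is supported on `ℤ_p^×`, i.e. `Res_{ℤ_p^×}(μ) = μ`, if and only if `ψ(A_μ) = 0`,
i.e. all Mahler coefficients `Ψμ(C(x,n))` vanish. -/
theorem supported_on_units_iff_psi_eq_zero
    (B : ℕ → C(ℤ_[p], ℤ_[p]))
    (hB : ∀ (n : ℕ) (x : ℤ_[p]),
      (n.factorial : ℤ_[p]) * B n x = ∏ i ∈ Finset.range n, (x - (i : ℤ_[p])))
    (Ψ : (C(ℤ_[p], ℤ_[p]) →L[ℤ_[p]] ℤ_[p]) → (C(ℤ_[p], ℤ_[p]) →L[ℤ_[p]] ℤ_[p]))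
    (hΨ : ∀ μ (f g : C(ℤ_[p], ℤ_[p])),
      (∀ y : ℤ_[p], g ((p : ℤ_[p]) * y) = f y) →
      (∀ x : ℤ_[p], ¬ (p : ℤ_[p]) ∣ x → g x = 0) →
      Ψ μ f = μ g)
    (μ : C(ℤ_[p], ℤ_[p]) →L[ℤ_[p]] ℤ_[p]) :
    (∀ (f h : C(ℤ_[p], ℤ_[p])),
      (∀ x : ℤ_[p], ¬ (p : ℤ_[p]) ∣ x → h x = f x) →
      (∀ x : ℤ_[p], (p : ℤ_[p]) ∣ x → h x = 0) →
      μ f = μ h) ↔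
    PowerSeries.mk (fun n => Ψ μ (B n)) = 0 := by
  simp only [PowerSeries.ext_iff, PowerSeries.coeff_mk, map_zero]
  constructor
  · intro hsupp n
    obtain ⟨g, hg_mul, hg_units⟩ := PadicInt.exists_apply_p_mul_eq_and_eq_zero_of_not_dvd (B n)
    rw [hΨ μ (B n) g hg_mul hg_units,
      hsupp g 0 (fun x hx => (hg_units x hx).symm) (fun _ _ => rfl), map_zero]
  · intro hcoeff f h hfh hh
    have hΨμ : Ψ μ = 0 := PadicInt.continuousLinearMap_eq_zero_of_map_mahler
      (PadicInt.eq_mahler_of_factorial_mul hB ▸ hcoeff)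
    have hdiff := hΨ μ (f.comp ⟨fun y => p * y, continuous_const_mul _⟩) (f - h)
      (fun y => by simp [hh _ (dvd_mul_right _ _)]) (fun x hx => by simp [hfh x hx])
    rw [hΨμ, zero_apply, map_sub, eq_comm, sub_eq_zero] at hdiff
    exact hdiff
end

section
/- Let G be an abelian profinite group and Q(G) the fraction ring of the Iwasawa algebra Λ(G). Suppose p is odd, G = ℤ_p^×, a is a topological generator of ℤ_p^×, and μ ∈ Λ(ℤ_p^×). Then μ' = μ/([a]-[1]) ∈ Q(ℤ_p^×) is a pseudo-measure: ([g]-[1])μ' ∈ Λ(ℤ_p^×) for all g ∈ ℤ_p^×. (Key step: the augmentation ideal I(ℤ_p^×) equals the principal ideal ([a]-[1])Λ(ℤ_p^×).) -/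
open scoped Classical

variable (p : ℕ) [Fact p.Prime]

/-- The group ring `ℤ_p[(ℤ/p^{n+1}ℤ)^×]` at level `n`. -/
abbrev IwLevel (n : ℕ) : Type :=
  MonoidAlgebra ℤ_[p] (ZMod (p ^ (n + 1)))ˣ

/-- The transition map `ℤ_p[(ℤ/p^{n+2}ℤ)^×] → ℤ_p[(ℤ/p^{n+1}ℤ)^×]`. -/
noncomputable def iwTransition (n : ℕ) : IwLevel p (n + 1) →+* IwLevel p n :=
  MonoidAlgebra.mapDomainRingHom ℤ_[p]
    (Units.map (ZMod.castHom (pow_dvd_pow p (Nat.le_succ (n + 1)))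
      (ZMod (p ^ (n + 1)))).toMonoidHom)

/-- The Iwasawa algebra `Λ(ℤ_p^×) = lim← ℤ_p[(ℤ/p^nℤ)^×]`, realized as the subring of
compatible sequences in the product of the finite-level group rings. -/
noncomputable def IwasawaAlgebra : Subring ((n : ℕ) → IwLevel p n) where
  carrier := {x | ∀ n, iwTransition p n (x (n + 1)) = x n}
  zero_mem' := fun n => by simp
  one_mem' := fun n => by simp
  add_mem' := by
    intro a b ha hb n
    simp only [Pi.add_apply, map_add, ha n, hb n]
  mul_mem' := by
    intro a b ha hb n
    simp only [Pi.mul_apply, map_mul, ha n, hb n]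
  neg_mem' := by
    intro a ha n
    simp only [Pi.neg_apply, map_neg, ha n]

/-- The group-like element `[a] ∈ Λ(ℤ_p^×)` attached to `a ∈ ℤ_p^×`. -/
noncomputable def iwDelta (a : (ℤ_[p])ˣ) : IwasawaAlgebra p :=
  ⟨fun n => MonoidAlgebra.single
      (Units.map (PadicInt.toZModPow (n + 1)).toMonoidHom a) 1, by
    intro n
    have h : (ZMod.castHom (pow_dvd_pow p (Nat.le_succ (n + 1)))
          (ZMod (p ^ (n + 1)))).comp (PadicInt.toZModPow (n + 2)) =
        PadicInt.toZModPow (n + 1) :=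
      PadicInt.zmod_cast_comp_toZModPow (n + 1) (n + 2) (Nat.le_succ _)
    have h2 : (ZMod.castHom (pow_dvd_pow p (Nat.le_succ (n + 1)))
          (ZMod (p ^ (n + 1)))).toMonoidHom.comp
            (PadicInt.toZModPow (n + 2)).toMonoidHom =
        (PadicInt.toZModPow (n + 1)).toMonoidHom := by
      ext x
      exact DFunLike.congr_fun h x
    show MonoidAlgebra.mapDomain _ _ = _
    rw [MonoidAlgebra.mapDomain_single, ← MonoidHom.comp_apply, ← Units.map_comp, h2]⟩

/-- The degree (augmentation) map `Λ(ℤ_p^×) → ℤ_p`, `Σ c_a [a] ↦ Σ c_a`. -/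
noncomputable def iwDegree : IwasawaAlgebra p →+* ℤ_[p] :=
  (((MonoidAlgebra.lift ℤ_[p] ℤ_[p] (ZMod (p ^ (0 + 1)))ˣ) 1).toRingHom).comp
    ((Pi.evalRingHom (IwLevel p) 0).comp (IwasawaAlgebra p).subtype)

/-!
At level `n` the group `(ℤ/p^{n+1})^×` is cyclic, generated by the image of the topological
generator `a`. In a group ring of a finite cyclic group the augmentation ideal is generated by
`[a] - 1`, and the annihilator of `[a] - 1` is spanned by the norm element `N_n = Σ [h]`.
Level-wise quotients `μ_n = ([a] - 1) Y_n` therefore exist but are compatible only up to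
multiples `δ_n N_n`; since the transition maps send `N_{n+1}` to `p N_n`, adding `ε_n N_n` with
`ε_n = Σ_i p^i δ_{n+i}` makes them compatible. The same relation shows that a compatible family
`c_n N_n` satisfies `c_n = p c_{n+1}`, so `c = 0`: `[a] - 1` is a non-zero-divisor, `μ / ([a] - 1)`
lives in the total ring of fractions, and `([g] - 1) μ / ([a] - 1) = c μ` whenever
`[g] - 1 = ([a] - 1) c`.
-/

open MonoidAlgebra Finset

namespace MonoidAlgebra

variable {R G H : Type*}

theorem sub_one_dvd_of_lift_one_eq_zero [CommRing R] [CommMonoid G] {g : G}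
    (hg : ∀ h : G, h ∈ Submonoid.powers g) {x : MonoidAlgebra R G} (hx : lift R R G 1 x = 0) :
    single g 1 - 1 ∣ x := by
  suffices ∀ x : MonoidAlgebra R G, single g 1 - 1 ∣ x - lift R R G 1 x • 1 by
    simpa [hx] using this x
  intro x
  induction x using MonoidAlgebra.induction_on with
  | of h =>
    obtain ⟨k, rfl⟩ := hg h
    simpa [single_pow] using sub_one_dvd_pow_sub_one (single g (1 : R)) k
  | add x y hx hy => simpa [add_sub_add_comm, add_smul] using dvd_add hx hy
  | smul r x hx => simpa [smul_sub, smul_smul] using dvd_smul_of_dvd r hx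

theorem lift_one_mapDomainRingHom [CommSemiring R] [Monoid G] [Monoid H] (f : G →* H)
    (x : MonoidAlgebra R G) : lift R R H 1 (mapDomainRingHom R f x) = lift R R G 1 x := by
  have h : (lift R R H 1).toRingHom.comp (mapDomainRingHom R f) = (lift R R G 1).toRingHom :=
    ringHom_ext (fun r => by simp) (fun g => by simp)
  exact DFunLike.congr_fun h x

section NormElement

variable [Ring R] [Fintype G]

variable (R G) in
noncomputable def normElement : MonoidAlgebra R G := ∑ h : G, single h 1

@[simp]
theorem normElement_coeff (h : G) : (normElement R G).coeff h = 1 := by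
  simp [normElement, coeff_sum, coeff_single, Finsupp.single_apply]

variable [Group G]

theorem single_mul_normElement (g : G) :
    single g (1 : R) * normElement R G = normElement R G := by
  rw [normElement, Finset.mul_sum]
  refine Fintype.sum_equiv (Equiv.mulLeft g) _ _ fun h => ?_
  simp

theorem sub_one_mul_normElement (g : G) : (single g (1 : R) - 1) * normElement R G = 0 := by
  rw [sub_mul, one_mul, single_mul_normElement, sub_self]

theorem eq_smul_normElement_of_sub_one_mul_eq_zero {g : G}
    (hg : ∀ h : G, h ∈ Submonoid.powers g) {z : MonoidAlgebra R G}
    (hz : (single g 1 - 1) * z = 0) : z = z.coeff 1 • normElement R G := by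
  have hfix : ∀ k : ℕ, single (g ^ k) 1 * z = z := by
    rw [sub_mul, one_mul, sub_eq_zero] at hz
    intro k
    induction k with
    | zero => simp [← one_def]
    | succ k ih => rw [pow_succ', ← one_mul (1 : R), ← single_mul_single, mul_assoc, ih, hz]
  ext h
  obtain ⟨k, rfl⟩ := hg h
  calc z.coeff (g ^ k) = (single (g ^ k) 1 * z).coeff (g ^ k) := by rw [hfix]
    _ = (z.coeff 1 • normElement R G).coeff (g ^ k) := by simp

theorem mapDomainRingHom_normElement [Group H] [Fintype H] (f : G →* H)
    (hf : Function.Surjective f) :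
    mapDomainRingHom R f (normElement R G) = Nat.card f.ker • normElement R H := by
  classical
  have hfiber : ∀ b : H, #{g | f g = b} = Nat.card f.ker := by
    intro b
    rw [MonoidHom.card_fiber_eq_of_mem_range f (hf b) (hf 1), Nat.card_eq_fintype_card,
      Fintype.card_subtype]
    simp [MonoidHom.mem_ker]
  simp only [normElement, map_sum, mapDomainRingHom_apply, mapDomain_single]
  rw [← Finset.sum_fiberwise_of_maps_to (g := f) (fun g _ => Finset.mem_univ (f g)),
    Finset.smul_sum]
  refine Finset.sum_congr rfl fun b _ => ?_
  rw [Finset.sum_congr rfl fun g hg => by rw [(Finset.mem_filter.mp hg).2], Finset.sum_const,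
    hfiber]

end NormElement

end MonoidAlgebra

namespace PadicInt

variable {p}

theorem eq_zero_of_forall_eq_p_mul {c : ℕ → ℤ_[p]} (hc : ∀ n, c n = p * c (n + 1)) (n : ℕ) :
    c n = 0 := by
  have hpow : ∀ k, c n = p ^ k * c (n + k) := by
    intro k
    induction k with
    | zero => simp
    | succ k ih => rw [ih, hc (n + k), ← mul_assoc, ← pow_succ, add_assoc]
  refine ext_of_toZModPow.mp fun k => ?_
  rw [hpow k, map_mul, map_pow, map_natCast, ← Nat.cast_pow, ZMod.natCast_self, zero_mul, map_zero]

theorem exists_eq_add_p_mul (δ : ℕ → ℤ_[p]) :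
    ∃ ε : ℕ → ℤ_[p], ∀ n, ε n = δ n + p * ε (n + 1) := by
  have hsum : ∀ n, Summable fun i => (p : ℤ_[p]) ^ i * δ (n + i) := by
    intro n
    refine Summable.of_norm_bounded (summable_geometric_of_lt_one (by positivity)
      (inv_lt_one_of_one_lt₀ (Nat.one_lt_cast.mpr (Fact.out : p.Prime).one_lt))) fun i => ?_
    rw [norm_mul, norm_pow, norm_p]
    exact mul_le_of_le_one_right (by positivity) (norm_le_one _)
  refine ⟨fun n => ∑' i, (p : ℤ_[p]) ^ i * δ (n + i), fun n => ?_⟩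
  dsimp only
  rw [(hsum n).tsum_eq_zero_add, ← (hsum (n + 1)).tsum_mul_left]
  simp only [pow_zero, one_mul, add_zero, pow_succ', mul_assoc, add_right_comm n, add_assoc]

theorem continuous_toZModPow (n : ℕ) : Continuous (toZModPow n : ℤ_[p] → ZMod (p ^ n)) := by
  refine continuous_discrete_rng.mpr fun b => isOpen_iff_forall_mem_open.mpr fun x hx => ?_
  have hr : (0 : ℝ) < (p : ℝ) ^ (-n : ℤ) :=
    zpow_pos (by exact_mod_cast (Fact.out : p.Prime).pos) _
  refine ⟨Metric.closedBall x _, fun y hy => ?_, IsUltrametricDist.isOpen_closedBall x hr.ne',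
    Metric.mem_closedBall_self hr.le⟩
  rw [Metric.mem_closedBall, dist_eq_norm, norm_le_pow_iff_mem_span_pow, ← ker_toZModPow,
    RingHom.mem_ker, map_sub, sub_eq_zero] at hy
  rw [Set.mem_preimage, Set.mem_singleton_iff] at hx ⊢
  rw [hy, hx]

end PadicInt

namespace IwasawaAlgebra

noncomputable def levelUnits (n : ℕ) : ℤ_[p]ˣ →* (ZMod (p ^ (n + 1)))ˣ :=
  Units.map (PadicInt.toZModPow (n + 1)).toMonoidHom

theorem levelUnits_surjective (n : ℕ) : Function.Surjective (levelUnits p n) := by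
  have : Fact (1 < p ^ (n + 1)) := ⟨Nat.one_lt_pow n.succ_ne_zero (Fact.out : p.Prime).one_lt⟩
  exact IsLocalRing.surjective_units_map_of_local_ringHom _ (ZMod.ringHom_surjective _)
    (.of_surjective _ (ZMod.ringHom_surjective _))

variable {p} in
theorem mem_powers_levelUnits {a : ℤ_[p]ˣ} (ha : (Subgroup.zpowers a).topologicalClosure = ⊤)
    (n : ℕ) (h : (ZMod (p ^ (n + 1)))ˣ) : h ∈ Submonoid.powers (levelUnits p n a) := by
  have hdense : Dense (Subgroup.zpowers a : Set ℤ_[p]ˣ) := by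
    rw [dense_iff_closure_eq, ← Subgroup.topologicalClosure_coe, ha, Subgroup.coe_top]
  have hopen : IsOpen {u : ℤ_[p]ˣ | levelUnits p n u = h} := by
    simp only [Units.ext_iff]
    exact (PadicInt.continuous_toZModPow (n + 1)).comp Units.continuous_val |>.isOpen_preimage
      {(h : ZMod (p ^ (n + 1)))} (isOpen_discrete _)
  obtain ⟨_, ⟨k, rfl⟩, hk⟩ := hdense.exists_mem_open hopen (levelUnits_surjective p n h)
  exact mem_powers_iff_mem_zpowers.mpr ⟨k, by rw [← hk, map_zpow]⟩

theorem iwTransition_eq_mapDomainRingHom (n : ℕ) :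
    iwTransition p n = mapDomainRingHom ℤ_[p] (ZMod.unitsMap (pow_dvd_pow p (n + 1).le_succ)) :=
  rfl

theorem card_ker_unitsMap (n : ℕ) :
    Nat.card (ZMod.unitsMap (pow_dvd_pow p (n + 1).le_succ)).ker = p := by
  have hp := (Fact.out : p.Prime)
  have htot : (p ^ (n + 2)).totient = p * (p ^ (n + 1)).totient := by
    rw [pow_succ' p (n + 1), Nat.totient_mul_of_prime_of_dvd hp (dvd_pow_self p n.succ_ne_zero)]
  have h := (ZMod.unitsMap (pow_dvd_pow p (n + 1).le_succ)).ker.card_mul_index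
  rw [Subgroup.index_ker, MonoidHom.range_eq_top.mpr (ZMod.unitsMap_surjective _),
    Subgroup.card_top, Nat.card_eq_fintype_card (α := (ZMod (p ^ (n + 1)))ˣ),
    Nat.card_eq_fintype_card (α := (ZMod (p ^ (n + 2)))ˣ), ZMod.card_units_eq_totient,
    ZMod.card_units_eq_totient, htot] at h
  exact Nat.eq_of_mul_eq_mul_right (Nat.totient_pos.mpr (pow_pos hp.pos _)) h

noncomputable def levelNorm (n : ℕ) : IwLevel p n := normElement ℤ_[p] (ZMod (p ^ (n + 1)))ˣ

theorem iwTransition_levelNorm (n : ℕ) :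
    iwTransition p n (levelNorm p (n + 1)) = (p : ℤ_[p]) • levelNorm p n := by
  rw [iwTransition_eq_mapDomainRingHom, levelNorm,
    mapDomainRingHom_normElement _ (ZMod.unitsMap_surjective _), card_ker_unitsMap,
    Nat.cast_smul_eq_nsmul]
  rfl

variable {p}

theorem iwTransition_smul {n : ℕ} (c : ℤ_[p]) (x : IwLevel p (n + 1)) :
    iwTransition p n (c • x) = c • iwTransition p n x :=
  mapDomain_smul _ c x

theorem iwDelta_sub_one_mem_ker_iwDegree (g : ℤ_[p]ˣ) :
    iwDelta p g - 1 ∈ RingHom.ker (iwDegree p) := by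
  simp [iwDegree, iwDelta]

theorem lift_one_eq_zero_of_iwDegree_eq_zero {μ : IwasawaAlgebra p} (hμ : iwDegree p μ = 0)
    (n : ℕ) : lift ℤ_[p] ℤ_[p] _ 1 (μ.1 n) = 0 := by
  induction n with
  | zero => exact hμ
  | succ n ih =>
    rwa [← μ.2 n, iwTransition_eq_mapDomainRingHom, lift_one_mapDomainRingHom] at ih

theorem iwDelta_sub_one_dvd {a : ℤ_[p]ˣ}
    (hgen : ∀ n (h : (ZMod (p ^ (n + 1)))ˣ), h ∈ Submonoid.powers (levelUnits p n a))
    {μ : IwasawaAlgebra p} (hμ : iwDegree p μ = 0) : iwDelta p a - 1 ∣ μ := by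
  set d := iwDelta p a - 1
  have hdvd : ∀ n, d.1 n ∣ μ.1 n := fun n =>
    sub_one_dvd_of_lift_one_eq_zero (hgen n) (lift_one_eq_zero_of_iwDegree_eq_zero hμ n)
  choose Y hY using hdvd
  have hdefect : ∀ n, ∃ c : ℤ_[p], iwTransition p n (Y (n + 1)) - Y n = c • levelNorm p n :=
    fun n => ⟨_, eq_smul_normElement_of_sub_one_mul_eq_zero (hgen n) (calc
      d.1 n * (iwTransition p n (Y (n + 1)) - Y n)
        = iwTransition p n (d.1 (n + 1) * Y (n + 1)) - d.1 n * Y n := by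
          rw [map_mul, d.2 n, mul_sub]
      _ = 0 := by rw [← hY, ← hY, μ.2 n, sub_self])⟩
  choose δ hδ using hdefect
  obtain ⟨ε, hε⟩ := PadicInt.exists_eq_add_p_mul δ
  refine ⟨⟨fun n => Y n + ε n • levelNorm p n, fun n => ?_⟩, Subtype.ext (funext fun n => ?_)⟩
  · calc iwTransition p n (Y (n + 1) + ε (n + 1) • levelNorm p (n + 1))
        = (iwTransition p n (Y (n + 1)) - Y n) + Y n + (p * ε (n + 1)) • levelNorm p n := by
          rw [map_add, iwTransition_smul, iwTransition_levelNorm, smul_smul, mul_comm,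
            sub_add_cancel]
      _ = Y n + ε n • levelNorm p n := by rw [hδ, hε n, add_smul]; abel
  · show μ.1 n = d.1 n * (Y n + ε n • levelNorm p n)
    have hnorm : d.1 n * levelNorm p n = 0 := sub_one_mul_normElement _
    rw [hY n, mul_add, mul_smul_comm, hnorm, smul_zero, add_zero]

theorem iwDelta_sub_one_mem_nonZeroDivisors {a : ℤ_[p]ˣ}
    (hgen : ∀ n (h : (ZMod (p ^ (n + 1)))ˣ), h ∈ Submonoid.powers (levelUnits p n a)) :
    iwDelta p a - 1 ∈ nonZeroDivisors (IwasawaAlgebra p) := by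
  rw [mem_nonZeroDivisors_iff_right]
  intro z hz
  have hlevel : ∀ n, z.1 n = (z.1 n).coeff 1 • levelNorm p n := fun n =>
    eq_smul_normElement_of_sub_one_mul_eq_zero (hgen n) (by
      rw [mul_comm]; exact congr_fun (congrArg Subtype.val hz) n)
  have hrec : ∀ n, (z.1 n).coeff 1 = p * (z.1 (n + 1)).coeff 1 := by
    intro n
    have h := z.2 n
    rw [hlevel (n + 1), hlevel n, iwTransition_smul, iwTransition_levelNorm, smul_smul] at h
    simpa [levelNorm, mul_comm] using congr(($h).coeff 1).symm
  exact Subtype.ext (funext fun n => by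
    rw [hlevel n, PadicInt.eq_zero_of_forall_eq_p_mul hrec n, zero_smul]; rfl)

theorem ker_iwDegree_eq_span {a : ℤ_[p]ˣ}
    (hgen : ∀ n (h : (ZMod (p ^ (n + 1)))ˣ), h ∈ Submonoid.powers (levelUnits p n a)) :
    RingHom.ker (iwDegree p) = Ideal.span {iwDelta p a - 1} := by
  refine le_antisymm (fun μ hμ => Ideal.mem_span_singleton.mpr (iwDelta_sub_one_dvd hgen hμ)) ?_
  rw [Ideal.span_le, Set.singleton_subset_iff]
  exact iwDelta_sub_one_mem_ker_iwDegree a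

end IwasawaAlgebra

theorem pseudo_measure_construction (a : (ℤ_[p])ˣ)
    (ha : (Subgroup.zpowers a).topologicalClosure = ⊤)
    (μ : IwasawaAlgebra p) :
    RingHom.ker (iwDegree p) = Ideal.span {iwDelta p a - 1} ∧
    ∃ μ' : FractionRing (IwasawaAlgebra p),
      μ' * algebraMap (IwasawaAlgebra p) (FractionRing (IwasawaAlgebra p))
          (iwDelta p a - 1) =
        algebraMap (IwasawaAlgebra p) (FractionRing (IwasawaAlgebra p)) μ ∧
      ∀ g : (ℤ_[p])ˣ, ∃ ν : IwasawaAlgebra p,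
        algebraMap (IwasawaAlgebra p) (FractionRing (IwasawaAlgebra p)) ν =
          algebraMap (IwasawaAlgebra p) (FractionRing (IwasawaAlgebra p))
            (iwDelta p g - 1) * μ' := by
  have hgen := IwasawaAlgebra.mem_powers_levelUnits ha
  have hker := IwasawaAlgebra.ker_iwDegree_eq_span hgen
  have hd := IwasawaAlgebra.iwDelta_sub_one_mem_nonZeroDivisors hgen
  refine ⟨hker, IsLocalization.mk' _ μ ⟨_, hd⟩, IsLocalization.mk'_spec _ μ _, fun g => ?_⟩
  obtain ⟨c, hc⟩ := Ideal.mem_span_singleton.mp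
    (hker ▸ IwasawaAlgebra.iwDelta_sub_one_mem_ker_iwDegree g)
  refine ⟨c * μ, ?_⟩
  rw [hc, mul_comm _ c, map_mul, map_mul, mul_assoc, IsLocalization.mk'_spec'_mk]
end

section
/- On ℤ_p[[T]]^× there is a unique multiplicative norm operator N with φ(N(f))(T) = Π_{ξ∈μ_p} f(ξ(1+T)-1), and it satisfies: (i) N(f) ≡ f (mod p) for all f ∈ ℤ_p[[T]]^×; (ii) if f ≡ 1 (mod p^k) with k ≥ 1 then N(f) ≡ 1 (mod p^{k+1}); (iii) for k₂ ≥ k₁ ≥ 0, N^{k₂}(f) ≡ N^{k₁}(f) (mod p^{k₁+1}). -/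
open PowerSeries

variable (p : ℕ) [Fact p.Prime]

/-- `hφ` characterizes the Frobenius-type operator `φ(f)(T) = f((1+T)^p - 1)` on
`ℤ_p[[T]]`: the `n`-th coefficient of `φ(f)` is the `n`-th coefficient of the polynomial
truncation of `f` evaluated at `(1+T)^p - 1`. -/
def IsFrobenius (φ : PowerSeries ℤ_[p] →+* PowerSeries ℤ_[p]) : Prop :=
  ∀ (f : PowerSeries ℤ_[p]) (n : ℕ),
    PowerSeries.coeff (R := ℤ_[p]) n (φ f) =
      PowerSeries.coeff (R := ℤ_[p]) n
        (Polynomial.eval₂ (PowerSeries.C (R := ℤ_[p])) ((1 + PowerSeries.X) ^ p - 1)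
          (PowerSeries.trunc (n + 1) f))

/-!
Modulo `p`, `φ` becomes the Frobenius `u ↦ u ^ p` of `𝔽_p⟦X⟧`, over whose image
`1, X, …, X ^ (p - 1)` is a basis (series multisection). Since `ℤ_p⟦X⟧` is `p`-adically complete
and torsion free, the same monomials form a basis of `ℤ_p⟦X⟧` over `φ`, so `N f` is the
determinant of the matrix `M` of multiplication by `f`. Modulo `p`, `M ^ p` is the scalar matrix
`f` (it multiplies by `f ^ p = frobenius f`), so `det M ≡ f`; and all diagonal entries of `M` are
congruent to the same series, so `p ∣ tr M`. Then `det (1 + p ^ k M) ≡ 1 + p ^ k tr M ≡ 1` modulo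
`p ^ (k + 1)` gives (ii), and (iii) follows by applying (ii) to `N^[j+1] f / N^[j] f`.
-/

namespace Coleman

section MulMatrix

variable {R S : Type*} [CommRing R] [CommRing S] {ι : Type*} [Fintype ι]

def combine (σ : R →+* S) (b : ι → S) : (ι → R) →+ S where
  toFun a := ∑ i, σ (a i) * b i
  map_zero' := by simp
  map_add' a a' := by simp only [Pi.add_apply, map_add, add_mul, Finset.sum_add_distrib]

variable {σ : R →+* S} {b : ι → S}

theorem combine_apply (a : ι → R) : combine σ b a = ∑ i, σ (a i) * b i := rfl

theorem combine_smul (c : R) (a : ι → R) : combine σ b (c • a) = σ c * combine σ b a := by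
  simp only [combine_apply, Pi.smul_apply, smul_eq_mul, map_mul, Finset.mul_sum, mul_assoc]

theorem dvd_combine {c : R} {a : ι → R} (h : ∀ i, c ∣ a i) : σ c ∣ combine σ b a :=
  Finset.dvd_sum fun i _ => (map_dvd σ (h i)).mul_right _

/-- `M` is the matrix of multiplication by `x` on `S`, viewed as an `R`-module through `σ`,
in the family `b`. -/
def IsMulMatrix (σ : R →+* S) (b : ι → S) (x : S) (M : Matrix ι ι R) : Prop :=
  ∀ j, x * b j = combine σ b (fun i => M i j)

variable {x y : S} {M N : Matrix ι ι R}

theorem isMulMatrix_one [DecidableEq ι] : IsMulMatrix σ b 1 1 := by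
  intro j
  simp [combine_apply, Matrix.one_apply]

theorem IsMulMatrix.add (hx : IsMulMatrix σ b x M) (hy : IsMulMatrix σ b y N) :
    IsMulMatrix σ b (x + y) (M + N) := fun j => by
  rw [add_mul, hx j, hy j, ← map_add]
  rfl

theorem IsMulMatrix.smul (hx : IsMulMatrix σ b x M) (c : R) :
    IsMulMatrix σ b (σ c * x) (c • M) := fun j => by
  rw [mul_assoc, hx j, ← combine_smul]
  rfl

theorem IsMulMatrix.mul (hx : IsMulMatrix σ b x M) (hy : IsMulMatrix σ b y N) :
    IsMulMatrix σ b (x * y) (M * N) := fun j => by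
  rw [mul_assoc, hy j, combine_apply, Finset.mul_sum]
  simp_rw [mul_left_comm x, hx _, combine_apply, Finset.mul_sum, Matrix.mul_apply, map_sum,
    Finset.sum_mul]
  rw [Finset.sum_comm]
  exact Finset.sum_congr rfl fun i _ => Finset.sum_congr rfl fun k _ => by rw [map_mul]; ring

theorem IsMulMatrix.pow [DecidableEq ι] (hx : IsMulMatrix σ b x M) (m : ℕ) :
    IsMulMatrix σ b (x ^ m) (M ^ m) := by
  induction m with
  | zero => simpa using isMulMatrix_one
  | succ m ih => simpa only [pow_succ] using ih.mul hx

theorem IsMulMatrix.map {R' S' : Type*} [CommRing R'] [CommRing S'] {σ' : R' →+* S'}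
    {b' : ι → S'} (ψ : S →+* S') (χ : R →+* R') (hσ : ∀ r, ψ (σ r) = σ' (χ r))
    (hb : ∀ i, ψ (b i) = b' i) (hx : IsMulMatrix σ b x M) :
    IsMulMatrix σ' b' (ψ x) (M.map χ) := fun j => by
  simp only [combine_apply, Matrix.map_apply, ← hσ, ← hb, ← map_mul, ← map_sum]
  exact congrArg ψ (hx j)

theorem IsMulMatrix.unique (hinj : Function.Injective (combine σ b))
    (hM : IsMulMatrix σ b x M) (hN : IsMulMatrix σ b x N) : M = N :=
  Matrix.ext fun i j => congrFun (hinj ((hM j).symm.trans (hN j))) i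

/-- For `σ = φ` this is the paper's `φ⁻¹ ∘ Norm`: `Algebra.norm` already lands in the base copy
of the ring. -/
noncomputable def normAlong (σ : R →+* S) : S →* R :=
  @Algebra.norm R S _ _ σ.toAlgebra

theorem IsMulMatrix.normAlong_eq_det [DecidableEq ι]
    (hbij : Function.Bijective (combine σ b)) (hx : IsMulMatrix σ b x M) :
    normAlong σ x = M.det := by
  let _ : Algebra R S := σ.toAlgebra
  have hsmul (a : ι → R) : ∑ i, a i • b i = combine σ b a := rfl
  have hli : LinearIndependent R b := by
    refine Fintype.linearIndependent_iff.mpr fun a ha => ?_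
    rw [hsmul, ← map_zero (combine σ b)] at ha
    exact congrFun (hbij.1 ha)
  have hspan : ⊤ ≤ Submodule.span R (Set.range b) := fun s _ => by
    obtain ⟨a, rfl⟩ := hbij.2 s
    exact (Submodule.mem_span_range_iff_exists_fun R).mpr ⟨a, hsmul a⟩
  let B := Module.Basis.mk hli hspan
  have hB : IsMulMatrix σ b x (Algebra.leftMulMatrix B x) := fun j => by
    simp only [Algebra.leftMulMatrix_eq_repr_mul, ← hsmul]
    simpa [B] using (B.sum_repr (x * B j)).symm
  rw [normAlong, Algebra.norm_eq_matrix_det B, hx.unique hbij.1 hB]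

end MulMatrix

section Multisection

variable {R : Type*} [CommRing R] {q : ℕ}

noncomputable def multisection (q i : ℕ) (f : R⟦X⟧) : R⟦X⟧ :=
  mk fun n => coeff (q * n + i) f

theorem map_multisection {R' : Type*} [CommRing R'] (χ : R →+* R') (i : ℕ) (f : R⟦X⟧) :
    map χ (multisection q i f) = multisection q i (map χ f) := by
  ext n
  simp [multisection]

theorem coeff_sum_expand_mul_X_pow (hq : q ≠ 0) (a : Fin q → R⟦X⟧) (i : Fin q) (n : ℕ) :
    coeff (q * n + i) (∑ j : Fin q, expand q hq (a j) * X ^ (j : ℕ)) = coeff n (a i) := by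
  rw [map_sum, Finset.sum_eq_single i]
  · rw [coeff_mul_X_pow, coeff_expand_mul]
  · intro j _ hji
    rw [coeff_mul_X_pow', coeff_expand]
    split_ifs with hle hdvd
    · obtain ⟨c, hc⟩ := hdvd
      have : (q * c + j) % q = (q * n + i) % q := by rw [← hc, Nat.sub_add_cancel hle]
      simp only [Nat.mul_add_mod, Nat.mod_eq_of_lt j.isLt, Nat.mod_eq_of_lt i.isLt] at this
      exact absurd (Fin.ext this) hji
    · rfl
    · rfl
  · simp

theorem sum_expand_multisection_mul_X_pow (hq : q ≠ 0) (f : R⟦X⟧) :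
    ∑ i : Fin q, expand q hq (multisection q i f) * X ^ (i : ℕ) = f := by
  ext n
  have hn := Nat.div_add_mod n q
  have := coeff_sum_expand_mul_X_pow hq (fun i => multisection q i f)
    ⟨n % q, Nat.mod_lt n (Nat.pos_of_ne_zero hq)⟩ (n / q)
  simp only [multisection, coeff_mk, hn] at this
  exact this

end Multisection

instance {R : Type*} [CommRing R] (q : ℕ) [CharP R q] : CharP R⟦X⟧ q :=
  charP_of_injective_ringHom C_injective q

section CharP

variable {p}

theorem frobenius_eq_expand (u : (ZMod p)⟦X⟧) :
    frobenius _ p u = expand p (Fact.out : p.Prime).ne_zero u := by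
  have := MvPowerSeries.map_frobenius_expand p (Fact.out : p.Prime).ne_zero (f := u)
  rw [ZMod.frobenius_zmod, MvPowerSeries.map_id] at this
  exact this.symm

theorem coeff_combine_frobenius (a : Fin p → (ZMod p)⟦X⟧) (i : Fin p) (n : ℕ) :
    coeff (p * n + i) (combine (frobenius _ p) (fun j : Fin p => X ^ (j : ℕ)) a) =
      coeff n (a i) := by
  simp only [combine_apply, frobenius_eq_expand]
  exact coeff_sum_expand_mul_X_pow _ a i n

theorem combine_frobenius_injective :
    Function.Injective (combine (frobenius (ZMod p)⟦X⟧ p) fun j : Fin p => X ^ (j : ℕ)) :=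
  fun a a' h => funext fun i => ext fun n => by
    rw [← coeff_combine_frobenius, h, coeff_combine_frobenius]

variable {f : (ZMod p)⟦X⟧} {M : Matrix (Fin p) (Fin p) (ZMod p)⟦X⟧}

/-- `M ^ p` is a matrix of multiplication by `f ^ p = frobenius f`, and so is the scalar
matrix `f`. -/
theorem IsMulMatrix.det_eq_of_frobenius
    (hM : IsMulMatrix (frobenius _ p) (fun j : Fin p => X ^ (j : ℕ)) f M) : M.det = f := by
  have hscalar : IsMulMatrix (frobenius _ p) (fun j : Fin p => X ^ (j : ℕ)) (f ^ p) (f • 1) := by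
    simpa [frobenius_def] using
      (isMulMatrix_one (σ := frobenius _ p) (b := fun j : Fin p => X ^ (j : ℕ))).smul f
  have hpow : M ^ p = f • 1 := (hM.pow p).unique combine_frobenius_injective hscalar
  apply frobenius_inj _ p
  rw [frobenius_def, frobenius_def, ← Matrix.det_pow, hpow, Matrix.det_smul, Matrix.det_one,
    mul_one, Fintype.card_fin]

theorem IsMulMatrix.trace_eq_zero_of_frobenius
    (hM : IsMulMatrix (frobenius _ p) (fun j : Fin p => X ^ (j : ℕ)) f M) : M.trace = 0 := by
  have hdiag (j : Fin p) : M j j = multisection p 0 f := ext fun n => by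
    rw [← coeff_combine_frobenius (fun i => M i j), ← hM j, coeff_mul_X_pow, multisection,
      coeff_mk, add_zero]
  simp [Matrix.trace, hdiag]

end CharP

section Congruences

variable {A : Type*} [CommRing A] {π : A}

theorem pow_succ_dvd_det_one_add_smul_sub_one {ι : Type*} [Fintype ι] [DecidableEq ι]
    {M : Matrix ι ι A} (htr : π ∣ M.trace) {k : ℕ} (hk : 1 ≤ k) :
    π ^ (k + 1) ∣ (1 + π ^ k • M).det - 1 := by
  rw [Matrix.det_one_add_smul, add_assoc, add_sub_cancel_left]
  refine dvd_add ?_ (Dvd.dvd.mul_left ?_ _)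
  · rw [pow_succ']
    exact mul_dvd_mul htr dvd_rfl
  · rw [← pow_mul]
    exact pow_dvd_pow π (by omega)

variable {N : A →* A} (h₁ : ∀ f, π ∣ N f - f)
  (h₂ : ∀ f k, 1 ≤ k → π ^ k ∣ f - 1 → π ^ (k + 1) ∣ N f - 1)
include h₁ h₂

/-- Write `N^[j+1] f = N^[j] f * u`; then `u ≡ 1 (mod π^(j+1))`, and the difference of the next
two iterates is `N (N^[j] f) * (N u - 1)`. -/
theorem pow_succ_dvd_iterate_succ_sub_iterate {f : A} (hf : IsUnit f) (j : ℕ) :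
    π ^ (j + 1) ∣ N^[j + 1] f - N^[j] f := by
  induction j with
  | zero => simpa using h₁ f
  | succ j ih =>
    obtain ⟨v, hv⟩ : IsUnit (N^[j] f) := by
      clear ih
      induction j with
      | zero => exact hf
      | succ j ih => simpa only [Function.iterate_succ_apply'] using ih.map N
    set u := ↑v⁻¹ * N^[j + 1] f
    have hu : N^[j + 1] f = N^[j] f * u := by rw [← hv, Units.mul_inv_cancel_left]
    have hu1 : π ^ (j + 1) ∣ u - 1 := by
      rw [show u - 1 = ↑v⁻¹ * (N^[j + 1] f - N^[j] f) by rw [mul_sub, ← hv, Units.inv_mul]]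
      exact Dvd.dvd.mul_left ih _
    have hnext : N^[j + 2] f = N (N^[j] f) * N u := by
      rw [Function.iterate_succ_apply' N (j + 1), hu, map_mul]
    rw [hnext, Function.iterate_succ_apply' N j, ← mul_sub_one]
    exact Dvd.dvd.mul_left (h₂ u (j + 1) (by omega) hu1) _

theorem pow_succ_dvd_iterate_sub_iterate {f : A} (hf : IsUnit f) {k₁ k₂ : ℕ} (hk : k₁ ≤ k₂) :
    π ^ (k₁ + 1) ∣ N^[k₂] f - N^[k₁] f := by
  induction k₂, hk using Nat.le_induction with
  | base => simp
  | succ m hm ih =>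
    rw [← sub_add_sub_cancel _ (N^[m] f)]
    exact dvd_add ((pow_dvd_pow π (by omega)).trans
      (pow_succ_dvd_iterate_succ_sub_iterate h₁ h₂ hf m)) ih

end Congruences

section PAdic

variable {p}

theorem C_dvd_iff_dvd_coeff {R : Type*} [CommRing R] (a : R) (f : R⟦X⟧) :
    C a ∣ f ↔ ∀ n, a ∣ coeff n f := by
  constructor
  · rintro ⟨g, rfl⟩ n
    exact ⟨coeff n g, coeff_C_mul n g a⟩
  · intro h
    choose c hc using h
    exact ⟨mk c, ext fun n => by rw [coeff_C_mul, coeff_mk, hc]⟩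

theorem summable_p_pow_mul (x : ℕ → ℤ_[p]) :
    Summable fun m => (p : ℤ_[p]) ^ m * x m := by
  refine Summable.of_norm_bounded (g := fun m => ((p : ℝ)⁻¹) ^ m)
    (summable_geometric_of_lt_one (by positivity)
      (inv_lt_one_of_one_lt₀ (by exact_mod_cast (Fact.out : p.Prime).one_lt))) fun m => ?_
  rw [norm_mul, norm_pow, PadicInt.norm_p]
  exact mul_le_of_le_one_right (by positivity) (PadicInt.norm_le_one _)

theorem p_pow_dvd_tsum_sub_sum (x : ℕ → ℤ_[p]) (n : ℕ) :
    (p : ℤ_[p]) ^ n ∣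
      ∑' m, (p : ℤ_[p]) ^ m * x m - ∑ m ∈ Finset.range n, (p : ℤ_[p]) ^ m * x m := by
  rw [← (summable_p_pow_mul x).sum_add_tsum_nat_add n, add_sub_cancel_left]
  simp_rw [pow_add, mul_comm _ ((p : ℤ_[p]) ^ n), mul_assoc,
    (summable_p_pow_mul fun m => x (m + n)).tsum_mul_left]
  exact dvd_mul_right _ _

noncomputable def reduce : ℤ_[p]⟦X⟧ →+* (ZMod p)⟦X⟧ := map PadicInt.toZMod

theorem p_pow_dvd_iff_dvd_coeff (k : ℕ) (f : ℤ_[p]⟦X⟧) :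
    (p : ℤ_[p]⟦X⟧) ^ k ∣ f ↔ ∀ n, (p : ℤ_[p]) ^ k ∣ coeff n f := by
  rw [← C_dvd_iff_dvd_coeff, map_pow, map_natCast]

theorem reduce_eq_zero_iff {f : ℤ_[p]⟦X⟧} : reduce f = 0 ↔ (p : ℤ_[p]⟦X⟧) ∣ f := by
  rw [← pow_one (p : ℤ_[p]⟦X⟧), p_pow_dvd_iff_dvd_coeff, PowerSeries.ext_iff]
  simp only [reduce, coeff_map, map_zero, pow_one, ← RingHom.mem_ker, PadicInt.ker_toZMod,
    PadicInt.maximalIdeal_eq_span_p, Ideal.mem_span_singleton]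

theorem eq_zero_of_forall_p_pow_dvd {f : ℤ_[p]⟦X⟧} (h : ∀ n, (p : ℤ_[p]⟦X⟧) ^ n ∣ f) :
    f = 0 :=
  ext fun m => PadicInt.ext_of_toZModPow.mp fun n => by
    rw [map_zero, map_zero, ← RingHom.mem_ker, PadicInt.ker_toZModPow,
      Ideal.mem_span_singleton]
    exact (p_pow_dvd_iff_dvd_coeff n f).mp (h n) m

theorem exists_p_pow_dvd_sub_sum (c : ℕ → ℤ_[p]⟦X⟧) :
    ∃ L, ∀ n, (p : ℤ_[p]⟦X⟧) ^ n ∣ L - ∑ m ∈ Finset.range n, (p : ℤ_[p]⟦X⟧) ^ m * c m := by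
  refine ⟨mk fun j => ∑' m, (p : ℤ_[p]) ^ m * coeff j (c m), fun n => ?_⟩
  rw [p_pow_dvd_iff_dvd_coeff]
  intro j
  have hcoeff (m : ℕ) : coeff j ((p : ℤ_[p]⟦X⟧) ^ m * c m) = (p : ℤ_[p]) ^ m * coeff j (c m) := by
    rw [← map_natCast (C (R := ℤ_[p])), ← map_pow, coeff_C_mul]
  rw [map_sub, coeff_mk, map_sum]
  simp only [hcoeff]
  exact p_pow_dvd_tsum_sub_sum (fun m => coeff j (c m)) n

section Nakayama

variable {ι : Type*} [Fintype ι] {σ : ℤ_[p]⟦X⟧ →+* ℤ_[p]⟦X⟧} {b : ι → ℤ_[p]⟦X⟧}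

theorem p_pow_dvd_combine {n : ℕ} {a : ι → ℤ_[p]⟦X⟧} (h : ∀ i, (p : ℤ_[p]⟦X⟧) ^ n ∣ a i) :
    (p : ℤ_[p]⟦X⟧) ^ n ∣ combine σ b a := by
  simpa using dvd_combine (σ := σ) (b := b) h

theorem combine_surjective_of_mod_p (h : ∀ f, ∃ a r, f = combine σ b a + p * r) :
    Function.Surjective (combine σ b) := by
  choose A rem hA using h
  intro f
  let S (n : ℕ) : ι → ℤ_[p]⟦X⟧ := ∑ m ∈ Finset.range n, (p : ℤ_[p]⟦X⟧) ^ m • A (rem^[m] f)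
  have hS (n : ℕ) : f = combine σ b (S n) + p ^ n * rem^[n] f := by
    induction n with
    | zero => simp [S]
    | succ n ih =>
      conv_lhs => rw [ih, hA (rem^[n] f)]
      simp only [S, Finset.sum_range_succ, map_add, combine_smul, map_pow, map_natCast,
        Function.iterate_succ_apply']
      ring
  choose u hu using fun i => exists_p_pow_dvd_sub_sum fun m => A (rem^[m] f) i
  refine ⟨u, (sub_eq_zero.mp (eq_zero_of_forall_p_pow_dvd fun n => ?_))⟩
  have hsplit : combine σ b u - f = combine σ b (u - S n) - p ^ n * rem^[n] f := by
    rw [map_sub]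
    linear_combination -(hS n)
  rw [hsplit]
  refine dvd_sub (p_pow_dvd_combine fun i => ?_) (dvd_mul_right _ _)
  simpa [S, Finset.sum_apply] using hu i n

theorem combine_injective_of_mod_p
    (h : ∀ a, (p : ℤ_[p]⟦X⟧) ∣ combine σ b a → ∀ i, (p : ℤ_[p]⟦X⟧) ∣ a i) :
    Function.Injective (combine σ b) := by
  have hp : (p : ℤ_[p]⟦X⟧) ≠ 0 := by
    rw [← map_natCast C]
    exact (map_ne_zero_iff _ C_injective).mpr (Nat.cast_ne_zero.mpr (Fact.out : p.Prime).ne_zero)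
  have key (n : ℕ) : ∀ a, combine σ b a = 0 → ∀ i, (p : ℤ_[p]⟦X⟧) ^ n ∣ a i := by
    induction n with
    | zero => simp
    | succ n ih =>
      intro a ha
      choose v hv using h a (ha ▸ dvd_zero _)
      have hv0 : combine σ b v = 0 := by
        rw [show a = (p : ℤ_[p]⟦X⟧) • v from funext hv, combine_smul, map_natCast] at ha
        exact (mul_eq_zero.mp ha).resolve_left hp
      intro i
      rw [hv i, pow_succ']
      exact mul_dvd_mul_left _ (ih v hv0 i)
  exact (injective_iff_map_eq_zero _).mpr fun a ha =>
    funext fun i => eq_zero_of_forall_p_pow_dvd fun n => key n a ha i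

end Nakayama

end PAdic

end Coleman

namespace IsFrobenius

open Coleman

variable {p} {φ : ℤ_[p]⟦X⟧ →+* ℤ_[p]⟦X⟧}

theorem reduce_apply (hφ : IsFrobenius p φ) (g : ℤ_[p]⟦X⟧) :
    reduce (φ g) = frobenius _ p (reduce g) := by
  ext n
  have hQ : reduce ((1 + X) ^ p - 1 : ℤ_[p]⟦X⟧) = frobenius _ p X := by
    rw [map_sub, map_pow, map_add, map_one, reduce, map_X, add_pow_char, one_pow,
      add_sub_cancel_left, frobenius_def]
  have hC : reduce.comp (C (R := ℤ_[p])) = ((frobenius _ p).comp C).comp PadicInt.toZMod :=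
    RingHom.ext fun a => by
      rw [RingHom.comp_apply, RingHom.comp_apply, RingHom.comp_apply, reduce, map_C, frobenius_def,
        ← map_pow, ZMod.pow_card]
  have heval (P : Polynomial ℤ_[p]) :
      reduce (P.eval₂ C ((1 + X) ^ p - 1)) =
        frobenius _ p (P.map PadicInt.toZMod : (ZMod p)⟦X⟧) := by
    rw [Polynomial.hom_eval₂, hQ, hC, ← Polynomial.eval₂_map, ← Polynomial.eval₂_C_X_eq_coe,
      Polynomial.hom_eval₂]
  calc coeff n (reduce (φ g))
      = coeff n (reduce ((trunc (n + 1) g).eval₂ C ((1 + X) ^ p - 1))) := by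
        simp only [reduce, coeff_map, hφ g n]
    _ = coeff n (frobenius _ p (reduce g)) := by
        rw [heval, ← trunc_map, frobenius_def, frobenius_def,
          ← coeff_coe_trunc_of_lt (f := reduce g ^ p) n.lt_succ_self, ← trunc_trunc_pow,
          coeff_coe_trunc_of_lt n.lt_succ_self]
        rfl

theorem reduce_combine (hφ : IsFrobenius p φ) (a : Fin p → ℤ_[p]⟦X⟧) :
    reduce (combine φ (fun j : Fin p => X ^ (j : ℕ)) a) =
      combine (frobenius _ p) (fun j : Fin p => X ^ (j : ℕ)) (fun i => reduce (a i)) := by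
  simp only [combine_apply, map_sum, map_mul, map_pow, hφ.reduce_apply]
  simp [reduce]

theorem combine_bijective (hφ : IsFrobenius p φ) :
    Function.Bijective (combine φ fun j : Fin p => X ^ (j : ℕ)) := by
  refine ⟨combine_injective_of_mod_p fun a ha i => ?_, combine_surjective_of_mod_p fun f => ?_⟩
  · rw [← reduce_eq_zero_iff] at ha ⊢
    rw [hφ.reduce_combine,
      ← map_zero (combine (frobenius (ZMod p)⟦X⟧ p) fun j : Fin p => X ^ (j : ℕ))] at ha
    exact congrFun (combine_frobenius_injective ha) i
  · have hred :
        reduce (f - combine φ (fun j : Fin p => X ^ (j : ℕ)) (multisection p · f)) = 0 := by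
      rw [map_sub, hφ.reduce_combine, sub_eq_zero]
      simp only [reduce, map_multisection, combine_apply, frobenius_eq_expand]
      exact (sum_expand_multisection_mul_X_pow _ _).symm
    obtain ⟨r, hr⟩ := reduce_eq_zero_iff.mp hred
    exact ⟨_, r, by rw [← hr]; ring⟩

theorem injective (hφ : IsFrobenius p φ) : Function.Injective φ := fun g g' h => by
  let i₀ : Fin p := ⟨0, (Fact.out : p.Prime).pos⟩
  have := hφ.combine_bijective.1 (a₁ := Pi.single i₀ g) (a₂ := Pi.single i₀ g') (by
    simp [combine_apply, Pi.single_apply, apply_ite φ, i₀, h])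
  simpa using congrFun this i₀

theorem exists_isMulMatrix (hφ : IsFrobenius p φ) (f : ℤ_[p]⟦X⟧) :
    ∃ M, IsMulMatrix φ (fun j : Fin p => X ^ (j : ℕ)) f M := by
  choose a ha using fun j : Fin p => hφ.combine_bijective.2 (f * X ^ (j : ℕ))
  exact ⟨Matrix.of fun i j => a j i, fun j => (ha j).symm⟩

variable {f : ℤ_[p]⟦X⟧} {M : Matrix (Fin p) (Fin p) ℤ_[p]⟦X⟧}

theorem isMulMatrix_reduce (hφ : IsFrobenius p φ)
    (hM : IsMulMatrix φ (fun j : Fin p => X ^ (j : ℕ)) f M) :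
    IsMulMatrix (frobenius _ p) (fun j : Fin p => X ^ (j : ℕ)) (reduce f) (M.map reduce) :=
  hM.map reduce reduce hφ.reduce_apply fun i => by simp [reduce]

theorem p_dvd_normAlong_sub_self (hφ : IsFrobenius p φ) (f : ℤ_[p]⟦X⟧) :
    (p : ℤ_[p]⟦X⟧) ∣ normAlong φ f - f := by
  obtain ⟨M, hM⟩ := hφ.exists_isMulMatrix f
  rw [hM.normAlong_eq_det hφ.combine_bijective, ← reduce_eq_zero_iff, map_sub, RingHom.map_det,
    sub_eq_zero]
  exact (hφ.isMulMatrix_reduce hM).det_eq_of_frobenius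

theorem p_pow_succ_dvd_normAlong_sub_one (hφ : IsFrobenius p φ) {k : ℕ}
    (hk : 1 ≤ k) (hf : (p : ℤ_[p]⟦X⟧) ^ k ∣ f - 1) :
    (p : ℤ_[p]⟦X⟧) ^ (k + 1) ∣ normAlong φ f - 1 := by
  obtain ⟨w, hw⟩ := hf
  obtain ⟨M, hM⟩ := hφ.exists_isMulMatrix w
  have hfM : IsMulMatrix φ (fun j : Fin p => X ^ (j : ℕ)) f (1 + (p : ℤ_[p]⟦X⟧) ^ k • M) := by
    have := isMulMatrix_one.add (hM.smul ((p : ℤ_[p]⟦X⟧) ^ k))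
    rwa [map_pow, map_natCast, ← hw, add_sub_cancel] at this
  have htr : (p : ℤ_[p]⟦X⟧) ∣ M.trace := by
    rw [← reduce_eq_zero_iff, AddMonoidHom.map_trace]
    exact (hφ.isMulMatrix_reduce hM).trace_eq_zero_of_frobenius
  rw [hfM.normAlong_eq_det hφ.combine_bijective]
  exact pow_succ_dvd_det_one_add_smul_sub_one htr hk

end IsFrobenius

/-- **Coleman's norm operator and its congruence properties.**
Let `φ` be the operator `f(T) ↦ f((1+T)^p - 1)`, so that `ℤ_p[[T]]` is a degree-`p`
extension of `φ(ℤ_p[[T]])`, and let `N = φ⁻¹ ∘ Norm` for this extension (this is the unique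
multiplicative operator satisfying `φ(N f)(T) = ∏_{ξ ∈ μ_p} f(ξ(1+T) - 1)`).  Then `N` is
multiplicative, it is uniquely determined by its defining property, and:
(i) `N(f) ≡ f (mod p)` for every unit `f`;
(ii) if `f` is a unit and `f ≡ 1 (mod p^k)` with `k ≥ 1`, then `N(f) ≡ 1 (mod p^{k+1})`;
(iii) for a unit `f` and `k₂ ≥ k₁ ≥ 0`, `N^{k₂}(f) ≡ N^{k₁}(f) (mod p^{k₁+1})`. -/
theorem coleman_norm_operator
    (φ : PowerSeries ℤ_[p] →+* PowerSeries ℤ_[p]) (hφ : IsFrobenius p φ)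
    (Nop : PowerSeries ℤ_[p] → PowerSeries ℤ_[p])
    (hN : ∀ f, Nop f =
      @Algebra.norm (PowerSeries ℤ_[p]) (PowerSeries ℤ_[p]) _ _ φ.toAlgebra f) :
    (∀ f g, Nop (f * g) = Nop f * Nop g) ∧
    (∀ Nop' : PowerSeries ℤ_[p] → PowerSeries ℤ_[p],
      (∀ f, φ (Nop' f) = φ (Nop f)) → Nop' = Nop) ∧
    (∀ f : PowerSeries ℤ_[p], IsUnit f → (p : PowerSeries ℤ_[p]) ∣ (Nop f - f)) ∧
    (∀ (f : PowerSeries ℤ_[p]) (k : ℕ), IsUnit f → 1 ≤ k →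
      (p : PowerSeries ℤ_[p]) ^ k ∣ (f - 1) →
      (p : PowerSeries ℤ_[p]) ^ (k + 1) ∣ (Nop f - 1)) ∧
    (∀ (f : PowerSeries ℤ_[p]) (k₁ k₂ : ℕ), IsUnit f → k₁ ≤ k₂ →
      (p : PowerSeries ℤ_[p]) ^ (k₁ + 1) ∣ (Nop^[k₂] f - Nop^[k₁] f)) := by
  obtain rfl : Nop = Coleman.normAlong φ := funext hN
  have h₁ := hφ.p_dvd_normAlong_sub_self
  have h₂ (f : ℤ_[p]⟦X⟧) (k : ℕ) := hφ.p_pow_succ_dvd_normAlong_sub_one (f := f) (k := k)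
  exact ⟨map_mul _, fun _ h => funext fun f => hφ.injective (h f), fun f _ => h₁ f,
    fun _ _ _ => h₂ _ _, fun _ _ _ hf hk => Coleman.pow_succ_dvd_iterate_sub_iterate h₁ h₂ hf hk⟩
end
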